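/- arXiv:2506.08273 — 2 statements merged into one kernel-verified Lean document; each statement's English description precedes it below -/
import Mathlib

section
/- Let 0 < s, p < ∞ with sp < d, and let δ > 0 satisfy d − sp ≥ δ. Then there exists a constant c = c(s, p, δ) < ∞ such that for every function u : ℤ^d → ℂ for which the left-hand side below is finite, one has ∑_{j ∈ ℤ^d \ {0}} |u(j)|^p / ‖j‖_∞^{sp} ≤ c · ∑_{j ∈ ℤ^d \ {0}} ∑_{m ∈ ℤ^d \ {0}, m ≠ j} |u(j) − u(m)|^p / ‖j − m‖_∞^{sp+d}. -/
open scoped ENNReal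

/-- The sup-norm `‖x‖_∞` of a point of `ℤ^d`, as a real number. -/
noncomputable def zsup {d : ℕ} (x : Fin d → ℤ) : ℝ :=
  ((Finset.univ.sup fun i => (x i).natAbs : ℕ) : ℝ)

/-!
Fix a large integer `Λ`. For `j ≠ 0` with `R = ‖j‖_∞`, let `Q_j` be the cube of `(ΛR)^d` lattice
points next to `j` on the side away from the origin, so that `‖j - m‖_∞ ≤ ΛR` for `m ∈ Q_j`.
Averaging `|u j|^p ≤ 2^p (|u j - u m|^p + |u m|^p)` over `m ∈ Q_j` bounds `|u j|^p / R^{sp}` by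
`2^p Λ^{sp}` times the `j`-th row of the double sum plus `2^p |Q_j|⁻¹ R^{-sp} ∑_{m ∈ Q_j} |u m|^p`.
Summed over `j`, the second term is at most `2^p κ` times the left-hand side, where `κ` bounds
`‖m‖_∞^{sp} ∑_{j : m ∈ Q_j} |Q_j|⁻¹ ‖j‖_∞^{-sp}`. Only `j` with `(1 + Λ) ‖j‖_∞ ≥ ‖m‖_∞`
contribute, and counting them in dyadic shells `2^k ≤ ‖j‖_∞ < 2^{k+1}` gives
`κ ≲ Λ^{sp} (4/Λ)^d ≲ Λ^{-δ}` when `d ≥ sp + δ`. For `Λ` with `2^p κ ≤ 1/2` the finite left-hand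
side can be absorbed.
-/

namespace FracHardy

open Finset Filter

lemma rpow_norm_le_two_rpow_mul {E : Type*} [SeminormedAddCommGroup E] {p : ℝ} (hp : 0 ≤ p)
    (a b : E) : ‖a‖ ^ p ≤ 2 ^ p * (‖a - b‖ ^ p + ‖b‖ ^ p) := by
  have hmax : ‖a‖ ≤ 2 * max ‖a - b‖ ‖b‖ := by
    linarith [norm_le_norm_add_norm_sub' a b, le_max_left ‖a - b‖ ‖b‖, le_max_right ‖a - b‖ ‖b‖]
  calc ‖a‖ ^ p ≤ (2 * max ‖a - b‖ ‖b‖) ^ p := by gcongr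
    _ = 2 ^ p * max ‖a - b‖ ‖b‖ ^ p := Real.mul_rpow zero_le_two (by positivity)
    _ ≤ 2 ^ p * (‖a - b‖ ^ p + ‖b‖ ^ p) := by
      gcongr
      rcases max_choice ‖a - b‖ ‖b‖ with h | h <;> rw [h] <;> simp [Real.rpow_nonneg]

lemma finset_sum_le_tsum_subtype {α : Type*} {P : α → Prop} (f : α → ℝ≥0∞) {s : Finset α}
    (hs : ∀ x ∈ s, P x) : ∑ x ∈ s, f x ≤ ∑' x : {x // P x}, f x := by
  classical
  rw [← sum_subtype_of_mem f hs]
  exact ENNReal.sum_le_tsum _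

lemma tsum_ite_lt_two_pow_le {a q : ℝ} (ha : 0 < a) (hq : 0 < q) :
    ∑' k : ℕ, (if a < 2 ^ k then ENNReal.ofReal (((2 : ℝ) ^ k) ^ q)⁻¹ else 0) ≤
      ENNReal.ofReal ((a ^ q)⁻¹ * (1 - 2 ^ (-q))⁻¹) := by
  classical
  have hex : ∃ k : ℕ, a < 2 ^ k := pow_unbounded_of_one_lt a one_lt_two
  set K := Nat.find hex
  set r : ℝ := 2 ^ (-q)
  have hr0 : 0 ≤ r := by positivity
  have hr1 : r < 1 := Real.rpow_lt_one_of_one_lt_of_neg one_lt_two (neg_lt_zero.mpr hq)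
  have hpow : ∀ k : ℕ, (((2 : ℝ) ^ k) ^ q)⁻¹ = r ^ k := fun k => by
    rw [← Real.rpow_natCast_mul zero_le_two, ← Real.rpow_neg zero_le_two,
      ← Real.rpow_mul_natCast zero_le_two]
    ring_nf
  calc ∑' k : ℕ, (if a < 2 ^ k then ENNReal.ofReal (((2 : ℝ) ^ k) ^ q)⁻¹ else 0)
      ≤ ∑' k : ℕ, (if K ≤ k then ENNReal.ofReal r ^ k else 0) := ENNReal.tsum_le_tsum fun k => by
        split_ifs with h h'
        · rw [hpow, ENNReal.ofReal_pow hr0]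
        · exact absurd (Nat.find_min' hex h) h'
        · exact zero_le
        · exact le_rfl
    _ = ∑' i : ℕ, ENNReal.ofReal r ^ (i + K) := by
      refine ((add_left_injective K).tsum_eq fun k hk => ?_).symm.trans (tsum_congr fun i => ?_)
      · have : K ≤ k := by by_contra h; exact hk (if_neg h)
        exact ⟨k - K, Nat.sub_add_cancel this⟩
      · exact if_pos (Nat.le_add_left K i)
    _ = ENNReal.ofReal (r ^ K * (1 - r)⁻¹) := by
      simp_rw [pow_add]
      rw [ENNReal.tsum_mul_right, ENNReal.tsum_geometric, mul_comm,
        ENNReal.ofReal_mul (by positivity), ENNReal.ofReal_pow hr0,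
        ENNReal.ofReal_inv_of_pos (by linarith), ENNReal.ofReal_sub _ hr0, ENNReal.ofReal_one]
    _ ≤ ENNReal.ofReal ((a ^ q)⁻¹ * (1 - 2 ^ (-q))⁻¹) := by
      gcongr
      rw [← hpow]
      gcongr
      exact (Nat.find_spec hex).le

lemma le_two_mul_of_le_add_inv_two_mul {S X : ℝ≥0∞} (hS : S ≠ ⊤) (h : S ≤ X + 2⁻¹ * S) :
    S ≤ 2 * X := by
  have hhalf : 2⁻¹ * S ≤ X := by
    refine ENNReal.le_of_add_le_add_right (ENNReal.mul_ne_top (by simp) hS : 2⁻¹ * S ≠ ⊤) ?_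
    rwa [← add_mul, ENNReal.inv_two_add_inv_two, one_mul]
  calc S = 2 * (2⁻¹ * S) := by
        rw [← mul_assoc, ENNReal.mul_inv_cancel two_ne_zero ENNReal.ofNat_ne_top, one_mul]
    _ ≤ 2 * X := by gcongr

variable {d : ℕ}

def nsup (x : Fin d → ℤ) : ℕ := univ.sup fun i => (x i).natAbs

lemma zsup_eq_nsup (x : Fin d → ℤ) : zsup x = nsup x := rfl

lemma zsup_nonneg (x : Fin d → ℤ) : 0 ≤ zsup x := Nat.cast_nonneg _

lemma nsup_le_iff {x : Fin d → ℤ} {N : ℕ} : nsup x ≤ N ↔ ∀ i, (x i).natAbs ≤ N := by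
  simp [nsup]

lemma natAbs_le_nsup (x : Fin d → ℤ) (i : Fin d) : (x i).natAbs ≤ nsup x :=
  nsup_le_iff.mp le_rfl i

lemma nsup_eq_zero_iff {x : Fin d → ℤ} : nsup x = 0 ↔ x = 0 := by
  rw [← Nat.le_zero, nsup_le_iff, funext_iff]
  simp

lemma zsup_zero : zsup (0 : Fin d → ℤ) = 0 := by
  rw [zsup_eq_nsup, nsup_eq_zero_iff.mpr rfl, Nat.cast_zero]

lemma one_le_nsup {x : Fin d → ℤ} (hx : x ≠ 0) : 1 ≤ nsup x :=
  Nat.one_le_iff_ne_zero.mpr (nsup_eq_zero_iff.not.mpr hx)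

lemma dim_pos_of_ne_zero {x : Fin d → ℤ} (hx : x ≠ 0) : 0 < d :=
  Nat.pos_of_ne_zero fun h => hx (by subst h; exact Subsingleton.elim _ _)

noncomputable def box (N : ℕ) : Finset (Fin d → ℤ) := Fintype.piFinset fun _ => Ioo (-(N : ℤ)) N

lemma mem_box_of_nsup_lt {x : Fin d → ℤ} {N : ℕ} (hx : nsup x < N) : x ∈ box N := by
  simp only [box, Fintype.mem_piFinset, mem_Ioo]
  intro i
  have := natAbs_le_nsup x i
  omega

lemma card_box_le (N : ℕ) : #(box (d := d) N) ≤ (2 * N) ^ d := by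
  rw [box, Fintype.card_piFinset, prod_const, card_univ, Fintype.card_fin, Int.card_Ioo]
  exact Nat.pow_le_pow_left (by omega) d

/-- The `L ^ d` lattice points `m` with `1 ≤ |m i - j i| ≤ L` in every coordinate, on the side
of `j i` away from the origin (the positive side when `j i = 0`). -/
noncomputable def outerCube (L : ℕ) (j : Fin d → ℤ) : Finset (Fin d → ℤ) :=
  Fintype.piFinset fun i => if 0 ≤ j i then Icc (j i + 1) (j i + L) else Icc (j i - L) (j i - 1)

lemma card_outerCube (L : ℕ) (j : Fin d → ℤ) : #(outerCube L j) = L ^ d := by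
  rw [outerCube, Fintype.card_piFinset]
  calc ∏ i, _ = ∏ _i : Fin d, L := prod_congr rfl fun i _ => by
        split_ifs <;> rw [Int.card_Icc] <;> omega
    _ = L ^ d := by simp

lemma natAbs_of_mem_outerCube {L : ℕ} {j m : Fin d → ℤ} (hm : m ∈ outerCube L j) (i : Fin d) :
    0 < (m i - j i).natAbs ∧ (m i - j i).natAbs ≤ L ∧
      (m i).natAbs = (j i).natAbs + (m i - j i).natAbs := by
  have := Fintype.mem_piFinset.mp hm i
  split_ifs at this <;> rw [mem_Icc] at this <;> omega

section outerCube

variable {L : ℕ} {j m : Fin d → ℤ}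

lemma nsup_sub_le_of_mem_outerCube (hm : m ∈ outerCube L j) : nsup (j - m) ≤ L :=
  nsup_le_iff.mpr fun i => by
    have := (natAbs_of_mem_outerCube hm i).2.1
    rw [Pi.sub_apply]
    omega

lemma nsup_le_of_mem_outerCube (hm : m ∈ outerCube L j) : nsup m ≤ nsup j + L :=
  nsup_le_iff.mpr fun i => by
    have := natAbs_of_mem_outerCube hm i
    have := natAbs_le_nsup j i
    omega

lemma ne_of_mem_outerCube (hd : 0 < d) (hm : m ∈ outerCube L j) : m ≠ j := fun h => by
  have := (natAbs_of_mem_outerCube hm ⟨0, hd⟩).1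
  simp [h] at this

lemma ne_zero_of_mem_outerCube (hd : 0 < d) (hm : m ∈ outerCube L j) : m ≠ 0 := fun h => by
  have := natAbs_of_mem_outerCube hm ⟨0, hd⟩
  simp [h] at this
  omega

lemma one_le_of_mem_outerCube (hd : 0 < d) (hm : m ∈ outerCube L j) : 1 ≤ L := by
  have := natAbs_of_mem_outerCube hm ⟨0, hd⟩
  omega

end outerCube

section cubeWeight

variable {Λ : ℕ} {q : ℝ} {j m : Fin d → ℤ}

/-- The weight `(|Q| R ^ q)⁻¹` of the cube `Q = outerCube (Λ * R) j`, where `R = ‖j‖_∞`. -/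
noncomputable def cubeWeight (Λ : ℕ) (q : ℝ) (j : Fin d → ℤ) : ℝ :=
  (((Λ : ℝ) * nsup j) ^ d * (nsup j : ℝ) ^ q)⁻¹

lemma cubeWeight_nonneg : 0 ≤ cubeWeight Λ q j := by
  unfold cubeWeight
  positivity

lemma card_mul_cubeWeight (hΛ : 1 ≤ Λ) (hj : j ≠ 0) :
    (#(outerCube (Λ * nsup j) j) : ℝ) * cubeWeight Λ q j = (zsup j ^ q)⁻¹ := by
  have hΛ' : (0 : ℝ) < Λ := by exact_mod_cast hΛ
  have hR : (0 : ℝ) < nsup j := by exact_mod_cast one_le_nsup hj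
  rw [card_outerCube, cubeWeight, zsup_eq_nsup]
  push_cast
  field_simp

lemma cubeWeight_le_of_mem_outerCube (hq : 0 ≤ q) (hΛ : 1 ≤ Λ) (hj : j ≠ 0)
    (hm : m ∈ outerCube (Λ * nsup j) j) :
    cubeWeight Λ q j ≤ Λ ^ q / zsup (j - m) ^ (q + d) := by
  have hΛ' : (0 : ℝ) < Λ := by exact_mod_cast hΛ
  have hR : (0 : ℝ) < nsup j := by exact_mod_cast one_le_nsup hj
  have hz : (0 : ℝ) < zsup (j - m) := by
    rw [zsup_eq_nsup]
    exact_mod_cast one_le_nsup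
      (sub_ne_zero.mpr (ne_of_mem_outerCube (dim_pos_of_ne_zero hj) hm).symm)
  have hzL : zsup (j - m) ≤ Λ * nsup j := by
    rw [zsup_eq_nsup]
    exact_mod_cast nsup_sub_le_of_mem_outerCube hm
  calc cubeWeight Λ q j = Λ ^ q / (Λ * nsup j) ^ (q + d) := by
        rw [cubeWeight, Real.rpow_add (by positivity), Real.rpow_natCast,
          Real.mul_rpow hΛ'.le hR.le]
        field_simp
    _ ≤ Λ ^ q / zsup (j - m) ^ (q + d) := by gcongr

lemma cubeWeight_le_of_le (hq : 0 ≤ q) (hΛ : 1 ≤ Λ) {N : ℝ} (hN : 0 < N) (hNj : N ≤ nsup j) :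
    cubeWeight Λ q j ≤ ((Λ * N) ^ d * N ^ q)⁻¹ := by
  have hΛ' : (0 : ℝ) < Λ := by exact_mod_cast hΛ
  unfold cubeWeight
  gcongr

end cubeWeight

section sums

variable {E : Type*} [SeminormedAddCommGroup E]

noncomputable def hardySum (u : (Fin d → ℤ) → E) (p q : ℝ) : ℝ≥0∞ :=
  ∑' j : {j : Fin d → ℤ // j ≠ 0}, ENNReal.ofReal (‖u j.1‖ ^ p / zsup j.1 ^ q)

noncomputable def gagliardoRow (u : (Fin d → ℤ) → E) (p q : ℝ) (j : Fin d → ℤ) : ℝ≥0∞ :=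
  ∑' m : {m : Fin d → ℤ // m ≠ 0 ∧ m ≠ j},
    ENNReal.ofReal (‖u j - u m.1‖ ^ p / zsup (j - m.1) ^ (q + d))

noncomputable def gagliardoSum (u : (Fin d → ℤ) → E) (p q : ℝ) : ℝ≥0∞ :=
  ∑' j : {j : Fin d → ℤ // j ≠ 0}, gagliardoRow u p q j.1

lemma hardySum_eq_tsum (u : (Fin d → ℤ) → E) (p : ℝ) {q : ℝ} (hq : q ≠ 0) :
    hardySum u p q = ∑' j, ENNReal.ofReal (‖u j‖ ^ p / zsup j ^ q) :=
  tsum_subtype_eq_of_support_subset (s := {j | j ≠ 0})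
    (f := fun j => ENNReal.ofReal (‖u j‖ ^ p / zsup j ^ q)) fun j hj h0 =>
      hj (by simp [h0, zsup_zero, Real.zero_rpow hq])

variable {p q : ℝ} {Λ : ℕ}

lemma rpow_div_le_sum_outerCube (hp : 0 ≤ p) (hq : 0 ≤ q) (hΛ : 1 ≤ Λ)
    (u : (Fin d → ℤ) → E) {j : Fin d → ℤ} (hj : j ≠ 0) :
    ‖u j‖ ^ p / zsup j ^ q ≤ ∑ m ∈ outerCube (Λ * nsup j) j,
      (2 ^ p * Λ ^ q * (‖u j - u m‖ ^ p / zsup (j - m) ^ (q + d)) +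
        2 ^ p * (‖u m‖ ^ p * cubeWeight Λ q j)) := by
  calc ‖u j‖ ^ p / zsup j ^ q = ∑ _m ∈ outerCube (Λ * nsup j) j, ‖u j‖ ^ p * cubeWeight Λ q j := by
        rw [sum_const, nsmul_eq_mul, mul_left_comm, card_mul_cubeWeight hΛ hj, div_eq_mul_inv]
    _ ≤ _ := sum_le_sum fun m hm => by
      calc ‖u j‖ ^ p * cubeWeight Λ q j
          ≤ 2 ^ p * (‖u j - u m‖ ^ p + ‖u m‖ ^ p) * cubeWeight Λ q j := by
            gcongr
            · exact cubeWeight_nonneg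
            · exact rpow_norm_le_two_rpow_mul hp _ _
        _ = 2 ^ p * ‖u j - u m‖ ^ p * cubeWeight Λ q j +
              2 ^ p * (‖u m‖ ^ p * cubeWeight Λ q j) := by ring
        _ ≤ 2 ^ p * ‖u j - u m‖ ^ p * (Λ ^ q / zsup (j - m) ^ (q + d)) +
              2 ^ p * (‖u m‖ ^ p * cubeWeight Λ q j) := by
          gcongr
          exact cubeWeight_le_of_mem_outerCube hq hΛ hj hm
        _ = _ := by ring

lemma ofReal_rpow_div_le_gagliardoRow_add (hp : 0 ≤ p) (hq : 0 ≤ q) (hΛ : 1 ≤ Λ)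
    (u : (Fin d → ℤ) → E) {j : Fin d → ℤ} (hj : j ≠ 0) :
    ENNReal.ofReal (‖u j‖ ^ p / zsup j ^ q) ≤
      ENNReal.ofReal (2 ^ p * Λ ^ q) * gagliardoRow u p q j + ENNReal.ofReal (2 ^ p) *
        ∑ m ∈ outerCube (Λ * nsup j) j, ENNReal.ofReal (‖u m‖ ^ p * cubeWeight Λ q j) := by
  have hd := dim_pos_of_ne_zero hj
  have hD : ∀ m, 0 ≤ ‖u j - u m‖ ^ p / zsup (j - m) ^ (q + d) := fun m =>
    div_nonneg (by positivity) (Real.rpow_nonneg (zsup_nonneg _) _)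
  have hY : ∀ m, 0 ≤ ‖u m‖ ^ p * cubeWeight Λ q j := fun m =>
    mul_nonneg (by positivity) cubeWeight_nonneg
  refine (ENNReal.ofReal_le_ofReal (rpow_div_le_sum_outerCube hp hq hΛ u hj)).trans ?_
  rw [ENNReal.ofReal_sum_of_nonneg fun m _ =>
      add_nonneg (mul_nonneg (by positivity) (hD m)) (mul_nonneg (by positivity) (hY m)),
    ← sum_congr rfl fun m _ => by rw [ENNReal.ofReal_add (mul_nonneg (by positivity) (hD m))
      (mul_nonneg (by positivity) (hY m)), ENNReal.ofReal_mul (by positivity),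
      ENNReal.ofReal_mul (q := ‖u m‖ ^ p * cubeWeight Λ q j) (by positivity)],
    sum_add_distrib, ← mul_sum, ← mul_sum]
  gcongr
  exact finset_sum_le_tsum_subtype _ fun m hm =>
    ⟨ne_zero_of_mem_outerCube hd hm, ne_of_mem_outerCube hd hm⟩

end sums

section counting

variable {Λ : ℕ} {q : ℝ}

lemma scale_bounds_of_mem_outerCube (hd : 0 < d) {j m : Fin d → ℤ} {k : ℕ}
    (hk : k = Nat.log 2 (nsup j)) (hm : m ∈ outerCube (Λ * nsup j) j) :
    2 ^ k ≤ nsup j ∧ nsup j < 2 ^ (k + 1) ∧ nsup m < (1 + Λ) * 2 ^ (k + 1) := by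
  have hR : nsup j ≠ 0 := fun h => by
    have := one_le_of_mem_outerCube hd hm
    simp [h] at this
  have hlo : 2 ^ k ≤ nsup j := hk ▸ Nat.pow_log_le_self 2 hR
  have hhi : nsup j < 2 ^ (k + 1) := hk ▸ Nat.lt_pow_succ_log_self one_lt_two _
  refine ⟨hlo, hhi, (nsup_le_of_mem_outerCube hm).trans_lt ?_⟩
  nlinarith

lemma tsum_cubeWeight_scale_le (hq : 0 ≤ q) (hΛ : 1 ≤ Λ) (hd : 0 < d) (m : Fin d → ℤ) (k : ℕ) :
    ∑' j, (if k = Nat.log 2 (nsup j) ∧ m ∈ outerCube (Λ * nsup j) j then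
        ENNReal.ofReal (cubeWeight Λ q j) else 0) ≤
      if (nsup m : ℝ) / (2 * (1 + Λ)) < 2 ^ k then
        ENNReal.ofReal ((4 / Λ) ^ d * (((2 : ℝ) ^ k) ^ q)⁻¹) else 0 := by
  classical
  have hΛ' : (0 : ℝ) < Λ := by exact_mod_cast hΛ
  split_ifs with ha
  · set c : ℝ := ((Λ * 2 ^ k) ^ d * ((2 : ℝ) ^ k) ^ q)⁻¹ with hc
    calc ∑' j, (if k = Nat.log 2 (nsup j) ∧ m ∈ outerCube (Λ * nsup j) j then
            ENNReal.ofReal (cubeWeight Λ q j) else 0)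
        ≤ ∑' j, (if j ∈ box (2 ^ (k + 1)) then ENNReal.ofReal c else 0) :=
          ENNReal.tsum_le_tsum fun j => by
            split_ifs with hj hbox
            · obtain ⟨hlo, hhi, -⟩ := scale_bounds_of_mem_outerCube hd hj.1 hj.2
              exact ENNReal.ofReal_le_ofReal
                (cubeWeight_le_of_le hq hΛ (by positivity) (by exact_mod_cast hlo))
            · obtain ⟨-, hhi, -⟩ := scale_bounds_of_mem_outerCube hd hj.1 hj.2
              exact absurd (mem_box_of_nsup_lt hhi) hbox
            · exact zero_le
            · exact le_rfl
      _ = #(box (d := d) (2 ^ (k + 1))) * ENNReal.ofReal c := by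
        rw [tsum_eq_sum fun j hj => if_neg hj, sum_ite_mem, inter_self, sum_const, nsmul_eq_mul]
      _ ≤ ((2 * 2 ^ (k + 1) : ℕ) ^ d : ℕ) * ENNReal.ofReal c := by
        gcongr
        exact_mod_cast card_box_le _
      _ = ENNReal.ofReal ((4 / Λ) ^ d * (((2 : ℝ) ^ k) ^ q)⁻¹) := by
        rw [← ENNReal.ofReal_natCast, ← ENNReal.ofReal_mul (by positivity), hc]
        congr 1
        push_cast
        rw [div_pow]
        field_simp
        ring
  · refine (ENNReal.tsum_eq_zero.mpr fun j => if_neg ?_).le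
    rintro ⟨hk, hm⟩
    obtain ⟨-, -, hlt⟩ := scale_bounds_of_mem_outerCube hd hk hm
    refine ha ((div_lt_iff₀ (by positivity)).mpr ?_)
    calc (nsup m : ℝ) < ((1 + Λ) * 2 ^ (k + 1) : ℕ) := by exact_mod_cast hlt
      _ = 2 ^ k * (2 * (1 + Λ)) := by push_cast; ring

noncomputable def overlapConst (Λ : ℕ) (q : ℝ) (d : ℕ) : ℝ :=
  (2 * (1 + Λ)) ^ q * (4 / Λ) ^ d * (1 - 2 ^ (-q))⁻¹

lemma tsum_cubeWeight_le (hq : 0 < q) (hΛ : 1 ≤ Λ) {m : Fin d → ℤ} (hm : m ≠ 0) :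
    ∑' j, (if m ∈ outerCube (Λ * nsup j) j then ENNReal.ofReal (cubeWeight Λ q j) else 0) ≤
      ENNReal.ofReal (overlapConst Λ q d / zsup m ^ q) := by
  classical
  have hd := dim_pos_of_ne_zero hm
  have hρ : (0 : ℝ) < nsup m := by exact_mod_cast one_le_nsup hm
  set a : ℝ := nsup m / (2 * (1 + Λ))
  have ha : 0 < a := by positivity
  calc ∑' j, (if m ∈ outerCube (Λ * nsup j) j then ENNReal.ofReal (cubeWeight Λ q j) else 0)
      = ∑' (k : ℕ) (j : Fin d → ℤ), (if k = Nat.log 2 (nsup j) ∧ m ∈ outerCube (Λ * nsup j) j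
          then ENNReal.ofReal (cubeWeight Λ q j) else 0) := by
        rw [ENNReal.tsum_comm]
        simp_rw [ite_and]
        exact tsum_congr fun j => (tsum_ite_eq (Nat.log 2 (nsup j)) fun _ => _).symm
    _ ≤ ∑' k : ℕ,
          (if a < 2 ^ k then ENNReal.ofReal ((4 / Λ) ^ d * (((2 : ℝ) ^ k) ^ q)⁻¹) else 0) :=
        ENNReal.tsum_le_tsum (tsum_cubeWeight_scale_le hq.le hΛ hd m)
    _ = ENNReal.ofReal ((4 / Λ) ^ d) *
          ∑' k : ℕ, (if a < 2 ^ k then ENNReal.ofReal (((2 : ℝ) ^ k) ^ q)⁻¹ else 0) := by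
        rw [← ENNReal.tsum_mul_left]
        refine tsum_congr fun k => ?_
        split_ifs
        · exact ENNReal.ofReal_mul (by positivity)
        · exact (mul_zero _).symm
    _ ≤ ENNReal.ofReal ((4 / Λ) ^ d) * ENNReal.ofReal ((a ^ q)⁻¹ * (1 - 2 ^ (-q))⁻¹) := by
        gcongr
        exact tsum_ite_lt_two_pow_le ha hq
    _ = ENNReal.ofReal (overlapConst Λ q d / zsup m ^ q) := by
        rw [← ENNReal.ofReal_mul (by positivity), overlapConst, zsup_eq_nsup,
          Real.div_rpow hρ.le (by positivity), inv_div]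
        ring_nf

/-- A Schur test for the averaging operator `f ↦ (j ↦ cubeWeight Λ q j * ∑_{m ∈ Q_j} f m)`. -/
lemma tsum_sum_outerCube_le (hq : 0 < q) (hΛ : 1 ≤ Λ) (hd : 0 < d) {f : (Fin d → ℤ) → ℝ}
    (hf : ∀ m, 0 ≤ f m) :
    ∑' j, ∑ m ∈ outerCube (Λ * nsup j) j, ENNReal.ofReal (f m * cubeWeight Λ q j) ≤
      ENNReal.ofReal (overlapConst Λ q d) * ∑' m, ENNReal.ofReal (f m / zsup m ^ q) := by
  classical
  calc ∑' j, ∑ m ∈ outerCube (Λ * nsup j) j, ENNReal.ofReal (f m * cubeWeight Λ q j)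
      = ∑' m, ENNReal.ofReal (f m) * ∑' j,
          (if m ∈ outerCube (Λ * nsup j) j then ENNReal.ofReal (cubeWeight Λ q j) else 0) := by
        simp_rw [← ENNReal.tsum_mul_left]
        rw [← ENNReal.tsum_comm]
        refine tsum_congr fun j => ?_
        rw [tsum_eq_sum (s := outerCube (Λ * nsup j) j) fun m hm => by simp [hm]]
        exact sum_congr rfl fun m hm => by rw [if_pos hm, ENNReal.ofReal_mul (hf m)]
    _ ≤ ∑' m, ENNReal.ofReal (overlapConst Λ q d) * ENNReal.ofReal (f m / zsup m ^ q) := by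
        refine ENNReal.tsum_le_tsum fun m => ?_
        rcases eq_or_ne m 0 with rfl | hm
        · rw [ENNReal.tsum_eq_zero.mpr fun j => if_neg (ne_zero_of_mem_outerCube hd · rfl)]
          simp
        · calc ENNReal.ofReal (f m) * ∑' j, _
              ≤ ENNReal.ofReal (f m) * ENNReal.ofReal (overlapConst Λ q d / zsup m ^ q) := by
                gcongr
                exact tsum_cubeWeight_le hq hΛ hm
            _ = _ := by
              rw [← ENNReal.ofReal_mul (hf m),
                ← ENNReal.ofReal_mul' (div_nonneg (hf m) (Real.rpow_nonneg (zsup_nonneg m) q))]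
              ring_nf
    _ = _ := ENNReal.tsum_mul_left

end counting

lemma eventually_two_rpow_mul_overlapConst_le {p q δ : ℝ} (hq : 0 < q) (hδ : 0 < δ) :
    ∀ᶠ Λ : ℕ in atTop, ∀ d : ℕ, q + δ ≤ d → 2 ^ p * overlapConst Λ q d ≤ 2⁻¹ := by
  have hr : (0 : ℝ) < 1 - 2 ^ (-q) :=
    sub_pos.mpr (Real.rpow_lt_one_of_one_lt_of_neg one_lt_two (neg_lt_zero.mpr hq))
  set B : ℝ := 2 * (2 ^ p * (16 ^ q * 4 ^ δ) * (1 - 2 ^ (-q))⁻¹)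
  have hΛδ : Tendsto (fun Λ : ℕ => (Λ : ℝ) ^ δ) atTop atTop :=
    (tendsto_rpow_atTop hδ).comp tendsto_natCast_atTop_atTop
  filter_upwards [eventually_ge_atTop 4, hΛδ.eventually_ge_atTop B] with Λ hΛ hB d hd
  have hΛ' : (4 : ℝ) ≤ Λ := by exact_mod_cast hΛ
  have hΛ0 : (0 : ℝ) < Λ := by linarith
  -- `(4 / Λ) ^ d` is decreasing in `d`, and `d ≥ q + δ` leaves the decay `Λ ^ (-δ)`.
  have hgeom : ((2 : ℝ) * (1 + Λ)) ^ q * ((4 : ℝ) / Λ) ^ d ≤ 16 ^ q * 4 ^ δ / (Λ : ℝ) ^ δ := by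
    calc ((2 : ℝ) * (1 + Λ)) ^ q * ((4 : ℝ) / Λ) ^ d
        ≤ (4 * (Λ : ℝ)) ^ q * ((4 : ℝ) / Λ) ^ (q + δ) := by
          rw [← Real.rpow_natCast]
          exact mul_le_mul (Real.rpow_le_rpow (by positivity) (by linarith) hq.le)
            (Real.rpow_le_rpow_of_exponent_ge (by positivity) ((div_le_one hΛ0).mpr hΛ') hd)
            (by positivity) (by positivity)
      _ = 16 ^ q * 4 ^ δ / (Λ : ℝ) ^ δ := by
          rw [Real.mul_rpow (by norm_num) hΛ0.le, Real.div_rpow (by norm_num) hΛ0.le,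
            Real.rpow_add (by norm_num), Real.rpow_add hΛ0,
            show (16 : ℝ) = 4 * 4 by norm_num, Real.mul_rpow (by norm_num) (by norm_num)]
          field_simp
  calc 2 ^ p * overlapConst Λ q d
      ≤ 2 ^ p * (16 ^ q * 4 ^ δ / (Λ : ℝ) ^ δ * (1 - 2 ^ (-q))⁻¹) := by
        rw [overlapConst]
        gcongr
    _ = B / (Λ : ℝ) ^ δ / 2 := by ring
    _ ≤ 2⁻¹ := by
      rw [div_div, div_le_iff₀ (by positivity)]
      linarith

lemma hardySum_le_gagliardoSum_add {E : Type*} [SeminormedAddCommGroup E] {p q : ℝ} (hp : 0 < p)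
    (hq : 0 < q) {Λ : ℕ} (hΛ : 1 ≤ Λ) (hd : 0 < d) (hsmall : 2 ^ p * overlapConst Λ q d ≤ 2⁻¹)
    (u : (Fin d → ℤ) → E) :
    hardySum u p q ≤
      ENNReal.ofReal (2 ^ p * Λ ^ q) * gagliardoSum u p q + 2⁻¹ * hardySum u p q := by
  calc hardySum u p q
      ≤ ∑' j : {j : Fin d → ℤ // j ≠ 0}, (ENNReal.ofReal (2 ^ p * Λ ^ q) * gagliardoRow u p q j.1 +
          ENNReal.ofReal (2 ^ p) * ∑ m ∈ outerCube (Λ * nsup j.1) j.1,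
            ENNReal.ofReal (‖u m‖ ^ p * cubeWeight Λ q j.1)) :=
        ENNReal.tsum_le_tsum fun j => ofReal_rpow_div_le_gagliardoRow_add hp.le hq.le hΛ u j.2
    _ ≤ ENNReal.ofReal (2 ^ p * Λ ^ q) * gagliardoSum u p q + ENNReal.ofReal (2 ^ p) *
          (ENNReal.ofReal (overlapConst Λ q d) * hardySum u p q) := by
        rw [ENNReal.tsum_add, ENNReal.tsum_mul_left, ENNReal.tsum_mul_left,
          hardySum_eq_tsum u p hq.ne']
        refine add_le_add le_rfl (mul_le_mul_right ?_ _)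
        exact (ENNReal.tsum_comp_le_tsum_of_injective Subtype.val_injective _).trans
          (tsum_sum_outerCube_le hq hΛ hd fun m => by positivity)
    _ ≤ ENNReal.ofReal (2 ^ p * Λ ^ q) * gagliardoSum u p q + 2⁻¹ * hardySum u p q := by
        rw [← mul_assoc, ← ENNReal.ofReal_mul (by positivity), ← ENNReal.ofReal_ofNat 2,
          ← ENNReal.ofReal_inv_of_pos two_pos]
        gcongr

end FracHardy

open FracHardy in
/-- Fractional discrete Hardy inequality on the full lattice `ℤ^d` for `sp < d`,
`d - sp ≥ δ > 0`, with a constant depending only on `s`, `p`, `δ`. -/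
theorem frac_hardy_sp_small_Z (s p δ : ℝ) (hs : 0 < s) (hp : 0 < p) (hδ : 0 < δ) :
    ∃ c : ℝ, 0 ≤ c ∧ ∀ (d : ℕ), s * p < d → δ ≤ (d : ℝ) - s * p →
      ∀ u : (Fin d → ℤ) → ℂ,
      (∑' (j : {j : Fin d → ℤ // j ≠ 0}),
          ENNReal.ofReal (‖u j.1‖ ^ p / zsup j.1 ^ (s * p))) ≠ ⊤ →
      (∑' (j : {j : Fin d → ℤ // j ≠ 0}),
          ENNReal.ofReal (‖u j.1‖ ^ p / zsup j.1 ^ (s * p)))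
        ≤ ENNReal.ofReal c *
            ∑' (j : {j : Fin d → ℤ // j ≠ 0})
              (m : {m : Fin d → ℤ // m ≠ 0 ∧ m ≠ j.1}),
              ENNReal.ofReal
                (‖u j.1 - u m.1‖ ^ p / zsup (j.1 - m.1) ^ (s * p + d)) := by
  have hq : 0 < s * p := mul_pos hs hp
  obtain ⟨Λ, hsmall, hΛ⟩ := ((eventually_two_rpow_mul_overlapConst_le (p := p) hq hδ).and
    (Filter.eventually_ge_atTop 1)).exists
  refine ⟨2 * (2 ^ p * Λ ^ (s * p)), by positivity, fun d hspd hδd u hfin => ?_⟩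
  have hd : 0 < d := by exact_mod_cast hq.trans hspd
  calc hardySum u p (s * p)
      ≤ 2 * (ENNReal.ofReal (2 ^ p * Λ ^ (s * p)) * gagliardoSum u p (s * p)) :=
        le_two_mul_of_le_add_inv_two_mul hfin
          (hardySum_le_gagliardoSum_add hp hq hΛ hd (hsmall d (by linarith)) u)
    _ = ENNReal.ofReal (2 * (2 ^ p * Λ ^ (s * p))) * gagliardoSum u p (s * p) := by
        rw [ENNReal.ofReal_mul zero_le_two, ENNReal.ofReal_ofNat, mul_assoc]
end

section
/- Let 0 < s, p < ∞ with sp < d, and let K ∈ ℕ satisfy 2^{sp+1}·(2^{p−1} ∨ 1)·2^{−K|sp−d|} ≤ 1. Set C(d,p,s,K) = 2^{sp+1+K(d ∧ sp)}·(2^{p−1} ∨ 1) / (1 − 2^{−d}). Then for every function u : ℤ₊^d → ℂ for which the left-hand side below is finite, one has ∑_{j ∈ ℤ₊^d \ {0}} |u(j)|^p / ‖j‖_∞^{sp} ≤ C(d,p,s,K) · ∑_{n=1}^{∞} ∑_{j ∈ A_n} ∑_{m ∈ A_{n+K}} |u(j) − u(m)|^p / 2^{(n+K)(d+sp)}. 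-/
open scoped ENNReal

/-- The sup-norm `‖x‖_∞` of a point of `ℤ₊^d`, as a real number. -/
noncomputable def nsup {d : ℕ} (x : Fin d → ℕ) : ℝ := ((Finset.univ.sup x : ℕ) : ℝ)

/-- The dyadic annulus `A_n ⊆ ℤ₊^d` for `n ≥ 1`:
points `j` with `2^(n-1) ≤ ‖j‖_∞ ≤ 2^n - 1`. -/
def Ann (d n : ℕ) : Set (Fin d → ℕ) :=
  {j | 2 ^ (n - 1) ≤ Finset.univ.sup j ∧ Finset.univ.sup j < 2 ^ n}

/-!
For `j ∈ A_{n+1}` and `m ∈ A_{n+1+K}`, `|u j|^p ≤ M (|u j - u m|^p + |u m|^p)` with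
`M = 2^{p-1} ∨ 1`. Averaging over `m` and using `2^n ≤ ‖j‖_∞`, `‖m‖_∞ < 2^{n+1+K}` and
`#A_{k+1} = 2^{kd} (2^d - 1)` gives `2 L_{n+1} ≤ C T_n + L_{n+1+K}`, where `L_k` is the part of the
left-hand side over `A_k` and `T_n` the `n`-th term on the right; the hypothesis on `K` is exactly
what makes the coefficient of `L_{n+1+K}` at most `1`. Summing over `n` gives `2 L ≤ C T + L`, and
`L < ∞` lets us cancel.
-/

open Finset

lemma Real.rpow_add_le_max_mul_add_rpow {p x y : ℝ} (hp : 0 ≤ p) (hx : 0 ≤ x) (hy : 0 ≤ y) :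
    (x + y) ^ p ≤ max (2 ^ (p - 1)) 1 * (x ^ p + y ^ p) := by
  rcases le_total p 1 with hp1 | hp1
  · calc (x + y) ^ p ≤ x ^ p + y ^ p := Real.rpow_add_le_add_rpow hx hy hp hp1
      _ ≤ max (2 ^ (p - 1)) 1 * (x ^ p + y ^ p) :=
        le_mul_of_one_le_left (by positivity) (le_max_right _ _)
  · lift x to NNReal using hx
    lift y to NNReal using hy
    calc ((x + y : NNReal) : ℝ) ^ p ≤ 2 ^ (p - 1) * (x ^ p + y ^ p) := by
          exact_mod_cast NNReal.rpow_add_le_mul_rpow_add_rpow x y hp1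
      _ ≤ max (2 ^ (p - 1)) 1 * (x ^ p + y ^ p) := by gcongr; exact le_max_left _ _

lemma rpow_norm_le_max_mul_add {E : Type*} [SeminormedAddCommGroup E] {p : ℝ} (hp : 0 ≤ p)
    (x y : E) : ‖x‖ ^ p ≤ max (2 ^ (p - 1)) 1 * (‖x - y‖ ^ p + ‖y‖ ^ p) :=
  calc ‖x‖ ^ p ≤ (‖x - y‖ + ‖y‖) ^ p := by gcongr; exact norm_le_norm_sub_add x y
    _ ≤ _ := Real.rpow_add_le_max_mul_add_rpow hp (norm_nonneg _) (norm_nonneg _)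

lemma sum_rpow_norm_div_le {α E : Type*} [SeminormedAddCommGroup E] {p a B : ℝ} (hp : 0 ≤ p)
    (ha : 0 < a) (u : α → E) (w : α → ℝ) {s t : Finset α} (ht : t.Nonempty)
    (hs : ∀ j ∈ s, a ≤ w j) (ht_pos : ∀ m ∈ t, 0 < w m) (ht_le : ∀ m ∈ t, w m ≤ B) :
    ∑ j ∈ s, ‖u j‖ ^ p / w j ≤ max (2 ^ (p - 1)) 1 / (a * #t) *
      (∑ j ∈ s, ∑ m ∈ t, ‖u j - u m‖ ^ p + #s * B * ∑ m ∈ t, ‖u m‖ ^ p / w m) := by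
  set M : ℝ := max (2 ^ (p - 1)) 1
  have ht_card : (0 : ℝ) < #t := by exact_mod_cast ht.card_pos
  have hpoint (x : E) :
      #t * ‖x‖ ^ p ≤ M * ∑ m ∈ t, (‖x - u m‖ ^ p + B * (‖u m‖ ^ p / w m)) := by
    rw [mul_sum, ← nsmul_eq_mul, ← sum_const]
    refine sum_le_sum fun m hm => (rpow_norm_le_max_mul_add hp x (u m)).trans ?_
    gcongr
    rw [mul_div_assoc', le_div_iff₀ (ht_pos m hm), mul_comm]
    gcongr
    exact ht_le m hm
  calc ∑ j ∈ s, ‖u j‖ ^ p / w j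
      ≤ ∑ j ∈ s, M / (a * #t) * ∑ m ∈ t, (‖u j - u m‖ ^ p + B * (‖u m‖ ^ p / w m)) := by
        refine sum_le_sum fun j hj => ?_
        calc ‖u j‖ ^ p / w j ≤ ‖u j‖ ^ p / a := by gcongr; exact hs j hj
          _ = #t * ‖u j‖ ^ p / (a * #t) := by field_simp
          _ ≤ (M * ∑ m ∈ t, (‖u j - u m‖ ^ p + B * (‖u m‖ ^ p / w m))) / (a * #t) :=
            div_le_div_of_nonneg_right (hpoint (u j)) (by positivity)
          _ = _ := by ring
    _ = M / (a * #t) *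
        (∑ j ∈ s, ∑ m ∈ t, ‖u j - u m‖ ^ p + #s * B * ∑ m ∈ t, ‖u m‖ ^ p / w m) := by
        simp only [← mul_sum, sum_add_distrib, sum_const, nsmul_eq_mul]
        ring

lemma tsum_le_tsum_of_two_mul_le_add_shift {f a : ℕ → ℝ≥0∞} {K : ℕ}
    (h : ∀ n, 2 * f n ≤ a n + f (n + K)) (hf : ∑' n, f n ≠ ∞) :
    ∑' n, f n ≤ ∑' n, a n := by
  have hshift : ∑' n, f (n + K) ≤ ∑' n, f n :=
    ENNReal.tsum_comp_le_tsum_of_injective (add_left_injective K) f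
  have h2 : ∑' n, f n + ∑' n, f n ≤ ∑' n, a n + ∑' n, f n := calc
    ∑' n, f n + ∑' n, f n = ∑' n, 2 * f n := by rw [ENNReal.tsum_mul_left, two_mul]
    _ ≤ ∑' n, (a n + f (n + K)) := ENNReal.tsum_le_tsum h
    _ ≤ ∑' n, a n + ∑' n, f n := by
        rw [ENNReal.tsum_add]
        gcongr
  exact (ENNReal.add_le_add_iff_right hf).mp h2

def annulus (d n : ℕ) : Finset (Fin d → ℕ) :=
  Fintype.piFinset (fun _ => range (2 ^ n)) \ Fintype.piFinset (fun _ => range (2 ^ (n - 1)))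

lemma mem_annulus {d n : ℕ} {j : Fin d → ℕ} : j ∈ annulus d n ↔ j ∈ Ann d n := by
  simp [annulus, Ann, and_comm]

lemma coe_annulus (d n : ℕ) : (annulus d n : Set (Fin d → ℕ)) = Ann d n :=
  Set.ext fun _ => mem_annulus

lemma card_annulus_succ (d k : ℕ) : #(annulus d (k + 1)) = (2 ^ d) ^ k * (2 ^ d - 1) := by
  rw [annulus, card_sdiff_of_subset, Fintype.card_piFinset, Fintype.card_piFinset, Nat.mul_sub_one,
    ← pow_succ]
  · simp [← pow_mul, mul_comm]
  · exact Fintype.piFinset_subset _ _ fun _ =>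
      range_subset_range.mpr (Nat.pow_le_pow_right two_pos (by omega))

lemma univ_sup_eq_zero_iff {d : ℕ} {j : Fin d → ℕ} : univ.sup j = 0 ↔ j = 0 := by
  rw [← Nat.bot_eq_zero, Finset.sup_eq_bot_iff]
  simp [funext_iff]

lemma mem_Ann_succ_iff {d n : ℕ} {j : Fin d → ℕ} :
    j ∈ Ann d (n + 1) ↔ j ≠ 0 ∧ Nat.log 2 (univ.sup j) = n := by
  by_cases hj : j = 0
  · simp [hj, Ann]
  · rw [Nat.log_eq_iff (Or.inr ⟨one_lt_two, univ_sup_eq_zero_iff.not.mpr hj⟩)]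
    simp [Ann, hj]

lemma tsum_ne_zero_eq_tsum_Ann {d : ℕ} (f : (Fin d → ℕ) → ℝ≥0∞) :
    ∑' j : {j : Fin d → ℕ // j ≠ 0}, f j = ∑' (n : ℕ) (j : Ann d (n + 1)), f j := by
  have hunion : {j : Fin d → ℕ | j ≠ 0} = ⋃ n, Ann d (n + 1) := by
    ext j
    simp [mem_Ann_succ_iff]
  have hdisj : Set.univ.PairwiseDisjoint fun n => Ann d (n + 1) := by
    intro m _ n _ hmn
    refine Set.disjoint_left.mpr fun j hm hn => hmn ?_
    rw [mem_Ann_succ_iff] at hm hn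
    rw [← hm.2, hn.2]
  rw [← ENNReal.tsum_biUnion hdisj, ← hunion]
  rfl

lemma tsum_Ann_ofReal {d : ℕ} (n : ℕ) {f : (Fin d → ℕ) → ℝ} (hf : ∀ j, 0 ≤ f j) :
    ∑' j : Ann d n, ENNReal.ofReal (f j) = ENNReal.ofReal (∑ j ∈ annulus d n, f j) := by
  rw [ENNReal.ofReal_sum_of_nonneg fun j _ => hf j, ← Finset.tsum_subtype, ← coe_annulus]
  rfl

lemma natCast_card_annulus_succ (d k : ℕ) :
    (#(annulus d (k + 1)) : ℝ) = ((2 : ℝ) ^ d) ^ k * (2 ^ d - 1) := by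
  rw [card_annulus_succ, Nat.cast_mul, Nat.cast_sub Nat.one_le_two_pow]
  push_cast
  ring

lemma annulus_succ_nonempty {d : ℕ} (hd : 0 < d) (k : ℕ) : (annulus d (k + 1)).Nonempty := by
  rw [← card_pos, card_annulus_succ]
  exact Nat.mul_pos (by positivity) (Nat.sub_pos_of_lt (Nat.one_lt_two_pow hd.ne'))

lemma two_rpow_pow_le_nsup_rpow {d k : ℕ} {q : ℝ} (hq : 0 ≤ q) {j : Fin d → ℕ}
    (hj : j ∈ annulus d (k + 1)) : ((2 : ℝ) ^ q) ^ k ≤ nsup j ^ q := by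
  have h : (2 : ℝ) ^ k ≤ nsup j := by
    unfold nsup
    exact_mod_cast (mem_annulus.mp hj).1
  rw [Real.rpow_pow_comm zero_le_two]
  exact Real.rpow_le_rpow (by positivity) h hq

lemma nsup_rpow_le_two_rpow_pow {d k : ℕ} {q : ℝ} (hq : 0 ≤ q) {j : Fin d → ℕ}
    (hj : j ∈ annulus d k) : nsup j ^ q ≤ ((2 : ℝ) ^ q) ^ k := by
  have h : nsup j ≤ (2 : ℝ) ^ k := by
    unfold nsup
    exact_mod_cast (mem_annulus.mp hj).2.le
  rw [Real.rpow_pow_comm zero_le_two]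
  exact Real.rpow_le_rpow (Nat.cast_nonneg _) h hq

lemma two_mul_sum_annulus_le {E : Type*} [SeminormedAddCommGroup E] {d K : ℕ} {p q : ℝ}
    (hd : 0 < d) (hp : 0 ≤ p) (hq : 0 ≤ q)
    (hK : 2 * ((2 : ℝ) ^ q) ^ (K + 1) * max (2 ^ (p - 1)) 1 ≤ ((2 : ℝ) ^ d) ^ K)
    (u : (Fin d → ℕ) → E) (n : ℕ) :
    2 * ∑ j ∈ annulus d (n + 1), ‖u j‖ ^ p / nsup j ^ q ≤
      2 * ((2 : ℝ) ^ q) ^ (K + 1) * max (2 ^ (p - 1)) 1 / (1 - ((2 : ℝ) ^ d)⁻¹) *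
        ∑ j ∈ annulus d (n + 1), ∑ m ∈ annulus d (n + 1 + K),
          ‖u j - u m‖ ^ p / (2 : ℝ) ^ (((n + 1 + K : ℕ) : ℝ) * (d + q)) +
      ∑ m ∈ annulus d (n + K + 1), ‖u m‖ ^ p / nsup m ^ q := by
  set M : ℝ := max (2 ^ (p - 1)) 1
  set y : ℝ := 2 ^ d
  set z : ℝ := 2 ^ q
  have hy : 1 < y := one_lt_pow₀ one_lt_two hd.ne'
  have hz : 0 < z := by positivity
  have hpos (k : ℕ) (j) (hj : j ∈ annulus d (k + 1)) : 0 < nsup j ^ q :=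
    (pow_pos hz k).trans_le (two_rpow_pow_le_nsup_rpow hq hj)
  have hden : (2 : ℝ) ^ (((n + 1 + K : ℕ) : ℝ) * (d + q)) = (y * z) ^ (n + 1 + K) := by
    rw [mul_comm, Real.rpow_mul_natCast zero_le_two, Real.rpow_add two_pos, Real.rpow_natCast]
  rw [show n + 1 + K = n + K + 1 by omega] at hden ⊢
  have hsum := sum_rpow_norm_div_le hp (pow_pos hz n) u (fun j => nsup j ^ q)
    (annulus_succ_nonempty hd (n + K)) (fun j => two_rpow_pow_le_nsup_rpow hq)
    (hpos (n + K)) (fun m => nsup_rpow_le_two_rpow_pow hq)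
  rw [natCast_card_annulus_succ, natCast_card_annulus_succ] at hsum
  simp only [hden, ← sum_div]
  set D := ∑ j ∈ annulus d (n + 1), ∑ m ∈ annulus d (n + K + 1), ‖u j - u m‖ ^ p
  set G := ∑ m ∈ annulus d (n + K + 1), ‖u m‖ ^ p / nsup m ^ q
  have hG : 0 ≤ G := sum_nonneg fun m hm => div_nonneg (by positivity) (hpos _ m hm).le
  calc 2 * ∑ j ∈ annulus d (n + 1), ‖u j‖ ^ p / nsup j ^ q
      ≤ 2 * (M / (z ^ n * (y ^ (n + K) * (y - 1))) *
          (D + y ^ n * (y - 1) * z ^ (n + K + 1) * G)) := by gcongr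
    _ = 2 * z ^ (K + 1) * M / (1 - y⁻¹) * (D / (y * z) ^ (n + K + 1)) +
          2 * z ^ (K + 1) * M / y ^ K * G := by
        have : y - 1 ≠ 0 := by linarith
        field_simp
        ring
    _ ≤ 2 * z ^ (K + 1) * M / (1 - y⁻¹) * (D / (y * z) ^ (n + K + 1)) + 1 * G := by
        gcongr
        exact (div_le_one (by positivity)).mpr hK
    _ = _ := by rw [one_mul]

lemma two_mul_tsum_Ann_le {E : Type*} [SeminormedAddCommGroup E] {d K : ℕ} {p q : ℝ}
    (hd : 0 < d) (hp : 0 ≤ p) (hq : 0 ≤ q)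
    (hK : 2 * ((2 : ℝ) ^ q) ^ (K + 1) * max (2 ^ (p - 1)) 1 ≤ ((2 : ℝ) ^ d) ^ K)
    (u : (Fin d → ℕ) → E) (n : ℕ) :
    2 * ∑' j : Ann d (n + 1), ENNReal.ofReal (‖u j.1‖ ^ p / nsup j.1 ^ q) ≤
      ENNReal.ofReal (2 * ((2 : ℝ) ^ q) ^ (K + 1) * max (2 ^ (p - 1)) 1 / (1 - ((2 : ℝ) ^ d)⁻¹)) *
        ∑' (j : Ann d (n + 1)) (m : Ann d (n + 1 + K)),
          ENNReal.ofReal (‖u j.1 - u m.1‖ ^ p / (2 : ℝ) ^ (((n + 1 + K : ℕ) : ℝ) * (d + q))) +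
      ∑' m : Ann d (n + K + 1), ENNReal.ofReal (‖u m.1‖ ^ p / nsup m.1 ^ q) := by
  have hw (j : Fin d → ℕ) : 0 ≤ ‖u j‖ ^ p / nsup j ^ q := by unfold nsup; positivity
  have hdiff (j m : Fin d → ℕ) :
      0 ≤ ‖u j - u m‖ ^ p / (2 : ℝ) ^ (((n + 1 + K : ℕ) : ℝ) * (d + q)) := by positivity
  have hC : 0 ≤ 2 * ((2 : ℝ) ^ q) ^ (K + 1) * max (2 ^ (p - 1)) 1 / (1 - ((2 : ℝ) ^ d)⁻¹) := by
    have : (0 : ℝ) ≤ 1 - ((2 : ℝ) ^ d)⁻¹ :=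
      sub_nonneg.mpr (inv_le_one_of_one_le₀ (one_le_pow₀ one_le_two))
    positivity
  rw [tsum_Ann_ofReal _ hw, tsum_Ann_ofReal _ hw,
    tsum_congr fun j : Ann d (n + 1) => tsum_Ann_ofReal _ (hdiff j),
    tsum_Ann_ofReal _ fun j => sum_nonneg fun m _ => hdiff j m, ← ENNReal.ofReal_ofNat 2,
    ← ENNReal.ofReal_mul zero_le_two, ← ENNReal.ofReal_mul hC,
    ← ENNReal.ofReal_add (mul_nonneg hC (sum_nonneg fun j _ => sum_nonneg fun m _ => hdiff j m))
      (sum_nonneg fun m _ => hw m)]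
  exact ENNReal.ofReal_le_ofReal (two_mul_sum_annulus_le hd hp hq hK u n)

theorem main_lemma_sp_small_general (d K : ℕ) (s p : ℝ) (hs : 0 < s) (hp : 0 < p)
    (hspd : s * p < d)
    (hK : (2 : ℝ) ^ (s * p + 1) * max ((2 : ℝ) ^ (p - 1)) 1 *
        (2 : ℝ) ^ (-(K : ℝ) * |s * p - (d : ℝ)|) ≤ 1) :
    ∀ u : (Fin d → ℕ) → ℂ,
      (∑' (j : {j : Fin d → ℕ // j ≠ 0}),
          ENNReal.ofReal (‖u j.1‖ ^ p / nsup j.1 ^ (s * p))) ≠ ⊤ →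
      (∑' (j : {j : Fin d → ℕ // j ≠ 0}),
          ENNReal.ofReal (‖u j.1‖ ^ p / nsup j.1 ^ (s * p)))
        ≤ ENNReal.ofReal
            ((2 : ℝ) ^ (s * p + 1 + (K : ℝ) * min (d : ℝ) (s * p)) *
              max ((2 : ℝ) ^ (p - 1)) 1 / (1 - (2 : ℝ) ^ (-(d : ℝ)))) *
          ∑' (n : ℕ) (j : Ann d (n + 1)) (m : Ann d (n + 1 + K)),
            ENNReal.ofReal (‖u j.1 - u m.1‖ ^ p /
              (2 : ℝ) ^ (((n + 1 + K : ℕ) : ℝ) * ((d : ℝ) + s * p))) := by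
  intro u hfin
  have hsp : 0 < s * p := mul_pos hs hp
  have hd : 0 < d := by exact_mod_cast hsp.trans hspd
  have hK' : 2 * ((2 : ℝ) ^ (s * p)) ^ (K + 1) * max (2 ^ (p - 1)) 1 ≤ ((2 : ℝ) ^ d) ^ K := by
    rw [abs_of_neg (by linarith), show -(K : ℝ) * -(s * p - d) = s * p * K - d * K by ring,
      Real.rpow_sub two_pos (s * p * K), Real.rpow_mul_natCast zero_le_two,
      Real.rpow_mul_natCast zero_le_two, Real.rpow_natCast, Real.rpow_add_one two_ne_zero] at hK
    rw [← div_le_one (by positivity)]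
    exact (show _ = _ by ring).trans_le hK
  have hC : (2 : ℝ) ^ (s * p + 1 + K * min (d : ℝ) (s * p)) =
      2 * ((2 : ℝ) ^ (s * p)) ^ (K + 1) := by
    rw [min_eq_right hspd.le,
      show s * p + 1 + K * (s * p) = s * p * (K + 1 : ℕ) + 1 by push_cast; ring,
      Real.rpow_add_one two_ne_zero, Real.rpow_mul_natCast zero_le_two, mul_comm]
  rw [tsum_ne_zero_eq_tsum_Ann fun j => ENNReal.ofReal (‖u j‖ ^ p / nsup j ^ (s * p))] at hfin ⊢
  rw [hC, Real.rpow_neg zero_le_two, Real.rpow_natCast, ← ENNReal.tsum_mul_left]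
  exact tsum_le_tsum_of_two_mul_le_add_shift
    (two_mul_tsum_Ann_le hd hp.le hsp.le hK' u) hfin

/-- Main lemma, case `sp < d`. -/
theorem main_lemma_sp_small (d K : ℕ) (s p : ℝ) (hd : 0 < d) (hs : 0 < s) (hp : 0 < p)
    (hspd : s * p < d)
    (hK : (2 : ℝ) ^ (s * p + 1) * max ((2 : ℝ) ^ (p - 1)) 1 *
        (2 : ℝ) ^ (-(K : ℝ) * |s * p - (d : ℝ)|) ≤ 1) :
    ∀ u : (Fin d → ℕ) → ℂ,
      (∑' (j : {j : Fin d → ℕ // j ≠ 0}),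
          ENNReal.ofReal (‖u j.1‖ ^ p / nsup j.1 ^ (s * p))) ≠ ⊤ →
      (∑' (j : {j : Fin d → ℕ // j ≠ 0}),
          ENNReal.ofReal (‖u j.1‖ ^ p / nsup j.1 ^ (s * p)))
        ≤ ENNReal.ofReal
            ((2 : ℝ) ^ (s * p + 1 + (K : ℝ) * min (d : ℝ) (s * p)) *
              max ((2 : ℝ) ^ (p - 1)) 1 / (1 - (2 : ℝ) ^ (-(d : ℝ)))) *
          ∑' (n : ℕ) (j : Ann d (n + 1)) (m : Ann d (n + 1 + K)),
            ENNReal.ofReal (‖u j.1 - u m.1‖ ^ p /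
              (2 : ℝ) ^ (((n + 1 + K : ℕ) : ℝ) * ((d : ℝ) + s * p))) :=
  main_lemma_sp_small_general d K s p hs hp hspd hK
end
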